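/- arXiv:2201.09182 — 8 statements merged into one kernel-verified Lean document; each statement's English description precedes it below -/
import Mathlib

section
/- For every TU game v, Φ^{k-SED}(v) = Φ^{Sh}(v̄), where v̄ is the game defined by v̄(S) = 0 if |S| < k and v̄(S) = v(S) if |S| ≥ k. -/
/-! Compare the two sums coalition by coalition. After truncation the marginal contribution of `i`
to `S` vanishes when `|S| < k - 1`, equals `v (S ∪ {i})` when `|S| = k - 1` (where the Shapley weight
`s! (n - s - 1)! / n!` is the weight `(k - 1)! (n - k)! / n!` of the first `k`-SED sum), and is
unchanged when `|S| ≥ k`. -/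

open Finset

/-- The Shapley value of player `i` in the TU game `v` on player set `Fin n`. -/
noncomputable def shapley (n : ℕ) (v : Finset (Fin n) → ℝ) (i : Fin n) : ℝ :=
  ∑ S ∈ (Finset.univ.erase i).powerset,
      ((S.card.factorial * (n - S.card - 1).factorial : ℝ) / n.factorial) *
        (v (insert i S) - v S)

/-- The `k`-SED value of player `i` in the TU game `v` on player set `Fin n`. -/
noncomputable def kSED (n k : ℕ) (v : Finset (Fin n) → ℝ) (i : Fin n) : ℝ :=
  (∑ S ∈ ((Finset.univ.erase i).powerset.filter (fun S => S.card = k - 1)),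
      (((n - k).factorial * (k - 1).factorial : ℝ) / n.factorial) * v (insert i S))
  + ∑ S ∈ ((Finset.univ.erase i).powerset.filter (fun S => k ≤ S.card)),
      (((n - S.card - 1).factorial * S.card.factorial : ℝ) / n.factorial) *
        (v (insert i S) - v S)

def truncate {α : Type*} (k : ℕ) (v : Finset α → ℝ) (S : Finset α) : ℝ :=
  if S.card < k then 0 else v S

lemma truncate_insert_sub_truncate {α : Type*} [DecidableEq α] {k : ℕ} (hk : 1 ≤ k)
    (v : Finset α → ℝ) {i : α} {S : Finset α} (hi : i ∉ S) :
    truncate k v (insert i S) - truncate k v S =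
      (if S.card = k - 1 then v (insert i S) else 0) +
        (if k ≤ S.card then v (insert i S) - v S else 0) := by
  simp only [truncate, card_insert_of_notMem hi]
  split_ifs <;> first | omega | ring

theorem kSED_eq_shapley_truncated_general (n k : ℕ) (hk : 1 ≤ k)
    (v : Finset (Fin n) → ℝ) (i : Fin n) :
    kSED n k v i = shapley n (fun S => if S.card < k then 0 else v S) i := by
  change _ = shapley n (truncate k v) i
  rw [kSED, sum_filter, sum_filter, ← sum_add_distrib, shapley]
  refine sum_congr rfl fun S hS => ?_
  have hi : i ∉ S := fun h => (mem_erase.1 (mem_powerset.1 hS h)).1 rfl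
  rw [truncate_insert_sub_truncate hk v hi, mul_add, mul_ite, mul_ite, mul_zero]
  congr 1
  · split_ifs with hcard
    · rw [hcard, show n - (k - 1) - 1 = n - k by omega, mul_comm ((k - 1).factorial : ℝ)]
    · rfl
  · rw [mul_comm (S.card.factorial : ℝ)]

/-- `Φ^{k-SED}(v) = Φ^{Sh}(v̄)` where `v̄` zeroes out coalitions of size `< k`. -/
theorem kSED_eq_shapley_truncated (n k : ℕ) (hk : 1 ≤ k) (hkn : k ≤ n)
    (v : Finset (Fin n) → ℝ) (hv : v ∅ = 0) (i : Fin n) :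
    kSED n k v i = shapley n (fun S => if S.card < k then 0 else v S) i :=
  kSED_eq_shapley_truncated_general n k hk v i
end

section
/- The k-SED value is efficient: for every TU game v on N, Σ_{i ∈ N} Φ^{k-SED}_i(v) = v(N). -/
open Finset

/-!
Write `m s` for the mean worth of the coalitions of size `s`. Double counting the pairs `(i, S)`
with `i ∉ S` and `|S| = s`: summed over all players, the part of the `k`-SED value paid on
coalitions of size `k - 1` is `m k`, and the Shapley-weighted marginal contributions to
coalitions of size `s` are `m (s + 1) - m s`. Summing over `k ≤ s < n` telescopes to `m n = v N`.
-/

namespace Finset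

theorem sum_powerset_filter_le_card {α β : Type*} [AddCommMonoid β] (t : Finset α) (k : ℕ)
    (f : Finset α → β) :
    ∑ S ∈ t.powerset with k ≤ S.card, f S
      = ∑ s ∈ Ico k (t.card + 1), ∑ S ∈ powersetCard s t, f S := by
  rw [← sum_fiberwise_of_maps_to (g := card) (t := Ico k (t.card + 1))]
  · refine sum_congr rfl fun s hs => sum_congr ?_ fun _ _ => rfl
    ext S
    simp only [mem_filter, mem_powerset, mem_powersetCard]
    have hks := (mem_Ico.mp hs).1
    constructor
    · rintro ⟨⟨h, -⟩, rfl⟩; exact ⟨h, rfl⟩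
    · rintro ⟨h, rfl⟩; exact ⟨⟨h, hks⟩, rfl⟩
  · intro S hS
    simp only [mem_filter, mem_powerset] at hS
    exact mem_Ico.mpr ⟨hS.2, Nat.lt_succ_of_le (card_le_card hS.1)⟩

variable {α β : Type*} [Fintype α] [DecidableEq α]

theorem sum_sum_powersetCard_erase [AddCommMonoid β] (s : ℕ) (f : Finset α → β) :
    ∑ i, ∑ S ∈ powersetCard s (univ.erase i), f S
      = ∑ T ∈ powersetCard s univ, (Fintype.card α - s) • f T := by
  rw [sum_comm' (t' := powersetCard s univ) (s' := fun T => Tᶜ)]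
  · refine sum_congr rfl fun T hT => ?_
    rw [sum_const, card_compl, (mem_powersetCard.mp hT).2]
  · intro i S
    simp only [mem_univ, mem_powersetCard, subset_erase, subset_univ, true_and, mem_compl]

theorem sum_powersetCard_erase_insert [AddCommMonoid β] (s : ℕ) (i : α) (f : Finset α → β) :
    ∑ S ∈ powersetCard s (univ.erase i), f (insert i S)
      = ∑ T ∈ powersetCard (s + 1) univ with i ∈ T, f T := by
  refine sum_nbij' (insert i) (·.erase i) ?_ ?_ ?_ ?_ fun _ _ => rfl
  · intro S hS
    simp only [mem_powersetCard, subset_erase, subset_univ, true_and] at hS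
    simp [card_insert_of_notMem hS.1, hS.2]
  · intro T hT
    simp only [mem_filter, mem_powersetCard, subset_univ, true_and] at hT
    simp [subset_erase, card_erase_of_mem hT.2, hT.1]
  · intro S hS
    simp only [mem_powersetCard, subset_erase] at hS
    exact erase_insert hS.1.2
  · intro T hT
    simp only [mem_filter] at hT
    exact insert_erase hT.2

theorem sum_sum_powersetCard_erase_insert [AddCommMonoid β] (s : ℕ) (f : Finset α → β) :
    ∑ i, ∑ S ∈ powersetCard s (univ.erase i), f (insert i S)
      = ∑ T ∈ powersetCard (s + 1) univ, (s + 1) • f T := by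
  simp_rw [sum_powersetCard_erase_insert]
  rw [sum_comm' (t' := powersetCard (s + 1) univ) (s' := id)]
  · refine sum_congr rfl fun T hT => ?_
    rw [id, sum_const, (mem_powersetCard.mp hT).2]
  · intro i T
    simp only [mem_univ, mem_filter, true_and, id]
    tauto

end Finset

open Nat

theorem inv_choose_eq_natCast_mul_factorial {n k : ℕ} (hk : 1 ≤ k) (hkn : k ≤ n) :
    (n.choose k : ℝ)⁻¹ = k * ((n - k)! * (k - 1)! / n !) := by
  rw [Nat.cast_choose ℝ hkn, ← Nat.mul_factorial_pred (by omega : k ≠ 0)]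
  push_cast
  field_simp

theorem inv_choose_eq_natCast_sub_mul_factorial {n s : ℕ} (hsn : s < n) :
    (n.choose s : ℝ)⁻¹ = (n - s : ℕ) * ((n - s - 1)! * s ! / n !) := by
  rw [← Nat.choose_symm hsn.le, inv_choose_eq_natCast_mul_factorial (by omega) (by omega),
    Nat.sub_sub_self hsn.le]
  ring

noncomputable def meanWorth (n : ℕ) (v : Finset (Fin n) → ℝ) (s : ℕ) : ℝ :=
  (n.choose s : ℝ)⁻¹ * ∑ T ∈ powersetCard s univ, v T

theorem meanWorth_self (n : ℕ) (v : Finset (Fin n) → ℝ) : meanWorth n v n = v univ := by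
  have : powersetCard n (univ : Finset (Fin n)) = {univ} := by
    simpa using powersetCard_self (univ : Finset (Fin n))
  simp [meanWorth, this]

theorem sum_kSED_fixed_part {n k : ℕ} (hk : 1 ≤ k) (hkn : k ≤ n)
    (v : Finset (Fin n) → ℝ) :
    ∑ i, ∑ S ∈ (univ.erase i).powerset with S.card = k - 1,
        ((n - k)! * (k - 1)! / n ! : ℝ) * v (insert i S) = meanWorth n v k := by
  simp_rw [← powersetCard_eq_filter]
  rw [sum_sum_powersetCard_erase_insert (k - 1)
      (fun T => ((n - k)! * (k - 1)! / n ! : ℝ) * v T), Nat.sub_add_cancel hk, meanWorth,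
    inv_choose_eq_natCast_mul_factorial hk hkn, mul_sum]
  refine sum_congr rfl fun T _ => ?_
  rw [nsmul_eq_mul, mul_assoc]

theorem sum_kSED_marginal_powersetCard {n s : ℕ} (hsn : s < n) (v : Finset (Fin n) → ℝ) :
    ∑ i, ∑ S ∈ powersetCard s (univ.erase i),
        ((n - s - 1)! * s ! / n ! : ℝ) * (v (insert i S) - v S)
      = meanWorth n v (s + 1) - meanWorth n v s := by
  simp_rw [mul_sub, sum_sub_distrib]
  rw [sum_sum_powersetCard_erase_insert s (fun T => ((n - s - 1)! * s ! / n ! : ℝ) * v T),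
    sum_sum_powersetCard_erase s (fun T => ((n - s - 1)! * s ! / n ! : ℝ) * v T), meanWorth,
    meanWorth, inv_choose_eq_natCast_mul_factorial (k := s + 1) (by omega) hsn,
    inv_choose_eq_natCast_sub_mul_factorial hsn, mul_sum, mul_sum, Fintype.card_fin]
  congr 1 <;> refine sum_congr rfl fun T _ => ?_
  · rw [nsmul_eq_mul, Nat.add_sub_cancel, Nat.sub_sub]
    push_cast
    ring
  · rw [nsmul_eq_mul, mul_assoc]

theorem sum_kSED_marginal_part {n k : ℕ} (hkn : k ≤ n) (v : Finset (Fin n) → ℝ) :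
    ∑ i, ∑ S ∈ (univ.erase i).powerset with k ≤ S.card,
        ((n - S.card - 1)! * S.card ! / n ! : ℝ) * (v (insert i S) - v S)
      = meanWorth n v n - meanWorth n v k := by
  have h_split (i : Fin n) := sum_powerset_filter_le_card (univ.erase i) k
    fun S => ((n - S.card - 1)! * S.card ! / n ! : ℝ) * (v (insert i S) - v S)
  simp only [card_erase_add_one (mem_univ _), Finset.card_fin] at h_split
  simp_rw [h_split]
  rw [sum_comm, ← sum_Ico_sub (meanWorth n v) hkn]
  refine sum_congr rfl fun s hs => ?_
  rw [← sum_kSED_marginal_powersetCard (mem_Ico.mp hs).2 v]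
  refine sum_congr rfl fun i _ => sum_congr rfl fun S hS => ?_
  rw [(mem_powersetCard.mp hS).2]

theorem kSED_efficient_general (n k : ℕ) (hk : 1 ≤ k) (hkn : k ≤ n)
    (v : Finset (Fin n) → ℝ) :
    ∑ i, kSED n k v i = v Finset.univ := by
  rw [← meanWorth_self n v]
  simp only [kSED, sum_add_distrib]
  rw [sum_kSED_fixed_part hk hkn, sum_kSED_marginal_part hkn]
  ring

/-- the `k`-SED value is efficient. -/
theorem kSED_efficient (n k : ℕ) (hk : 1 ≤ k) (hkn : k ≤ n)
    (v : Finset (Fin n) → ℝ) (hv : v ∅ = 0) :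
    ∑ i, kSED n k v i = v Finset.univ :=
  kSED_efficient_general n k hk hkn v
end

section
/- A value Φ on TU games with player set N satisfies efficiency, symmetry, linearity, and the k-nullifying null player property if and only if Φ = Φ^{k-SED}. -/
open Finset

/-!
Every game with `v ∅ = 0` is a linear combination of the Dirac games `δ_T` with `0 < |T| < k`
and the unanimity games `u_T` with `|T| ≥ k`; the coefficients of the `u_T` are the Harsanyi
dividends of the restriction of `v` to coalitions of size at least `k`. In each of these basis
games the players outside `T` are `k`-nullifying null players and the players in `T` are
symmetric, so efficiency forces the value `1/|T|` on the members of `T` in `u_T` and `0`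
everywhere else. By linearity, at most one value satisfies the four axioms.

The `k`-SED value satisfies them. Linearity and the null player property can be read off the
formula, and symmetry follows from invariance under permutations of the players. For efficiency,
write `Φ^{k-SED}_i(v)` as `∑_{S ∌ i} (w(S ∪ i) v(S ∪ i) - w'(S) v(S))`: a coalition `T` occurs
`|T|` times in the first sum and `n - |T|` times in the second, and the coefficients cancel
except at `T = N`, where they add up to `1`.
-/

namespace TUGame

section Linear

variable {α : Type*}

def IsLinear (Φ : (Finset α → ℝ) → α → ℝ) : Prop :=
  ∀ u w : Finset α → ℝ, u ∅ = 0 → w ∅ = 0 → ∀ γ η : ℝ, ∀ i : α,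
    Φ (fun S => γ * u S + η * w S) i = γ * Φ u i + η * Φ w i

theorem IsLinear.map_sum {Φ : (Finset α → ℝ) → α → ℝ} (hΦ : IsLinear Φ) {ι : Type*}
    (s : Finset ι) (c : ι → ℝ) (g : ι → Finset α → ℝ) (hg : ∀ b ∈ s, g b ∅ = 0) (i : α) :
    Φ (fun S => ∑ b ∈ s, c b * g b S) i = ∑ b ∈ s, c b * Φ (g b) i := by
  induction s using Finset.cons_induction with
  | empty => simpa using hΦ (fun _ => 0) (fun _ => 0) rfl rfl 0 0 i
  | cons a s ha ih =>
    have hs : ∑ b ∈ s, c b * g b ∅ = 0 :=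
      sum_eq_zero fun b hb => by rw [hg b (mem_cons_of_mem hb), mul_zero]
    have := hΦ (g a) (fun S => ∑ b ∈ s, c b * g b S) (hg a (mem_cons_self a s)) hs (c a) 1 i
    simp only [one_mul] at this
    simp only [sum_cons, this, ih fun b hb => hg b (mem_cons_of_mem hb)]

end Linear

section Basis

variable {α : Type*} [DecidableEq α]

noncomputable def harsanyiDividend (w : Finset α → ℝ) (T : Finset α) : ℝ :=
  ∑ R ∈ T.powerset, IncidenceAlgebra.mu ℝ R T * w R

theorem sum_powerset_harsanyiDividend (w : Finset α → ℝ) (S : Finset α) :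
    ∑ T ∈ S.powerset, harsanyiDividend w T = w S := by
  unfold harsanyiDividend
  rw [sum_comm' (t' := S.powerset) (s' := fun R => Icc R S)]
  · simp_rw [← sum_mul, IncidenceAlgebra.sum_Icc_mu_right, ite_mul, one_mul, zero_mul]
    simp
  · intro T R
    simp only [mem_powerset, mem_Icc]
    exact ⟨fun ⟨hTS, hRT⟩ => ⟨⟨hRT, hTS⟩, hRT.trans hTS⟩, fun ⟨⟨hRT, hTS⟩, _⟩ => ⟨hTS, hRT⟩⟩

theorem harsanyiDividend_eq_zero {w : Finset α → ℝ} {T : Finset α}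
    (h : ∀ R ⊆ T, w R = 0) : harsanyiDividend w T = 0 :=
  sum_eq_zero fun R hR => by rw [h R (mem_powerset.1 hR), mul_zero]

def kBasisGame (k : ℕ) (T S : Finset α) : ℝ :=
  if T.card < k then (if S = T then 1 else 0) else if T ⊆ S then 1 else 0

noncomputable def kBasisCoeff (k : ℕ) (v : Finset α → ℝ) (T : Finset α) : ℝ :=
  if T.card < k then v T else harsanyiDividend (fun R => if k ≤ R.card then v R else 0) T

theorem kBasisCoeff_empty (k : ℕ) {v : Finset α → ℝ} (hv : v ∅ = 0) :
    kBasisCoeff k v ∅ = 0 := by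
  rw [kBasisCoeff]
  split_ifs
  · exact hv
  · exact harsanyiDividend_eq_zero fun R hR => by simp [subset_empty.1 hR, hv]

theorem kBasisGame_empty (k : ℕ) {T : Finset α} (hT : T.Nonempty) : kBasisGame k T ∅ = 0 := by
  simp [kBasisGame, hT.ne_empty.symm, hT.ne_empty]

theorem kBasisGame_eq_zero_of_not_subset (k : ℕ) {T S : Finset α} (h : ¬ T ⊆ S) :
    kBasisGame k T S = 0 := by
  have : S ≠ T := fun hST => h (hST ▸ subset_rfl)
  simp [kBasisGame, h, this]

theorem kBasisGame_insert_of_card_lt {k : ℕ} {T S : Finset α} {j : α} (hj : j ∉ T)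
    (hS : S.card < k) : kBasisGame k T (insert j S) = 0 := by
  by_cases hT : T.card < k
  · rw [kBasisGame, if_pos hT, if_neg (by rintro rfl; exact hj (mem_insert_self j S))]
  · rw [kBasisGame, if_neg hT, if_neg]
    intro hTS
    have := card_le_card ((subset_insert_iff_of_notMem hj).1 hTS)
    omega

theorem kBasisGame_insert_of_le_card {k : ℕ} {T S : Finset α} {j : α} (hj : j ∉ T)
    (hS : k ≤ S.card) : kBasisGame k T (insert j S) = kBasisGame k T S := by
  by_cases hT : T.card < k
  · have hne : ∀ U : Finset α, S ⊆ U → U ≠ T := fun U hU h => by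
      have := card_le_card hU; rw [h] at this; omega
    simp only [kBasisGame, if_pos hT, if_neg (hne _ (subset_insert j S)),
      if_neg (hne S subset_rfl)]
  · simp only [kBasisGame, if_neg hT, subset_insert_iff_of_notMem hj]

variable [Fintype α]

theorem sum_kBasisCoeff_mul_kBasisGame (k : ℕ) {v : Finset α → ℝ} (hv : v ∅ = 0)
    (S : Finset α) :
    ∑ T ∈ univ.erase ∅, kBasisCoeff k v T * kBasisGame k T S = v S := by
  -- `v` is its part on coalitions of size `< k` plus its truncation to sizes `≥ k`, and the
  -- dividends of the truncation vanish below size `k`.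
  have hterm : ∀ T, kBasisCoeff k v T * kBasisGame k T S =
      (if S = T then (if T.card < k then v T else 0) else 0) +
        if T ⊆ S then harsanyiDividend (fun R => if k ≤ R.card then v R else 0) T else 0 := by
    intro T
    by_cases hT : T.card < k
    · have hzero : harsanyiDividend (fun R => if k ≤ R.card then v R else 0) T = 0 :=
        harsanyiDividend_eq_zero fun R hR => if_neg (by have := card_le_card hR; omega)
      by_cases hST : S = T <;> simp [kBasisCoeff, kBasisGame, hT, hST, hzero]
    · simp [kBasisCoeff, kBasisGame, hT]
  rw [sum_erase _ (by rw [kBasisCoeff_empty k hv, zero_mul]), sum_congr rfl fun T _ => hterm T,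
    sum_add_distrib, sum_ite_eq, ← sum_filter (· ⊆ S), filter_subset_univ,
    sum_powerset_harsanyiDividend]
  by_cases hS : S.card < k <;> simp [hS]

theorem kBasisGame_univ {k : ℕ} (hkn : k ≤ Fintype.card α) (T : Finset α) :
    kBasisGame k T univ = if k ≤ T.card then 1 else 0 := by
  by_cases hT : T.card < k
  · have : univ ≠ T := fun h => by rw [← h, card_univ] at hT; omega
    simp [kBasisGame, hT, this]
  · simp [kBasisGame, hT]

theorem eq_ite_sum_div_card {x : α → ℝ} {T : Finset α} (hT : T.Nonempty)
    (hout : ∀ j ∉ T, x j = 0) (hin : ∀ i ∈ T, ∀ j ∈ T, x i = x j) (i : α) :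
    x i = if i ∈ T then (∑ j, x j) / T.card else 0 := by
  split_ifs with hi
  · have hsum : ∑ j, x j = T.card * x i := by
      rw [← sum_subset (subset_univ T) fun j _ hj => hout j hj,
        sum_congr rfl fun j hj => hin j hj i hi, sum_const, nsmul_eq_mul]
    rw [hsum, mul_div_cancel_left₀ _ (Nat.cast_ne_zero.2 hT.card_pos.ne')]
  · exact hout i hi

end Basis

section Values

variable {α : Type*} [Fintype α] [DecidableEq α]

def IsEfficient (Φ : (Finset α → ℝ) → α → ℝ) : Prop :=
  ∀ v : Finset α → ℝ, v ∅ = 0 → ∑ i, Φ v i = v univ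

def IsSymmetric (Φ : (Finset α → ℝ) → α → ℝ) : Prop :=
  ∀ v : Finset α → ℝ, v ∅ = 0 → ∀ i j : α,
    (∀ S ∈ (univ \ {i, j} : Finset α).powerset, v (insert i S) = v (insert j S)) →
      Φ v i = Φ v j

def HasKNullifyingNullPlayerProperty (k : ℕ) (Φ : (Finset α → ℝ) → α → ℝ) : Prop :=
  ∀ v : Finset α → ℝ, v ∅ = 0 → ∀ i : α,
    (∀ S ∈ (univ.erase i).powerset, S.card < k → v (insert i S) = 0) →
    (∀ S ∈ (univ.erase i).powerset, k ≤ S.card → v (insert i S) = v S) →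
    Φ v i = 0

def SatisfiesAxioms (k : ℕ) (Φ : (Finset α → ℝ) → α → ℝ) : Prop :=
  IsEfficient Φ ∧ IsSymmetric Φ ∧ IsLinear Φ ∧ HasKNullifyingNullPlayerProperty k Φ

theorem SatisfiesAxioms.congr {k : ℕ} {Φ Ψ : (Finset α → ℝ) → α → ℝ}
    (hΨ : SatisfiesAxioms k Ψ) (h : ∀ v : Finset α → ℝ, v ∅ = 0 → ∀ i, Φ v i = Ψ v i) :
    SatisfiesAxioms k Φ := by
  obtain ⟨heff, hsym, hlin, hnull⟩ := hΨ
  refine ⟨fun v hv => ?_, fun v hv i j hij => ?_, fun u w hu hw γ η i => ?_,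
    fun v hv i h₁ h₂ => ?_⟩
  · simp_rw [h v hv, heff v hv]
  · rw [h v hv, h v hv, hsym v hv i j hij]
  · rw [h _ (by simp [hu, hw]), h u hu, h w hw, hlin u w hu hw]
  · rw [h v hv, hnull v hv i h₁ h₂]

theorem apply_kBasisGame {k : ℕ} (hkn : k ≤ Fintype.card α) {Φ : (Finset α → ℝ) → α → ℝ}
    (heff : IsEfficient Φ) (hsym : IsSymmetric Φ) (hnull : HasKNullifyingNullPlayerProperty k Φ)
    {T : Finset α} (hT : T.Nonempty) (i : α) :
    Φ (kBasisGame k T) i = if k ≤ T.card ∧ i ∈ T then (T.card : ℝ)⁻¹ else 0 := by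
  have h₀ := kBasisGame_empty k hT
  have hout : ∀ j ∉ T, Φ (kBasisGame k T) j = 0 := fun j hj =>
    hnull _ h₀ j (fun S _ hS => kBasisGame_insert_of_card_lt hj hS)
      (fun S _ hS => kBasisGame_insert_of_le_card hj hS)
  have hin : ∀ p ∈ T, ∀ q ∈ T, Φ (kBasisGame k T) p = Φ (kBasisGame k T) q := by
    intro p hp q hq
    by_cases hpq : p = q
    · rw [hpq]
    refine hsym _ h₀ p q fun S hS => ?_
    have hpqS : p ∉ S ∧ q ∉ S := by
      simpa [subset_iff, or_imp, forall_and] using mem_powerset.1 hS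
    rw [kBasisGame_eq_zero_of_not_subset k fun h => ?_,
      kBasisGame_eq_zero_of_not_subset k fun h => ?_]
    · exact (mem_insert.1 (h hp)).elim hpq hpqS.1
    · exact (mem_insert.1 (h hq)).elim (fun h' => hpq h'.symm) hpqS.2
  rw [eq_ite_sum_div_card hT hout hin i, heff _ h₀, kBasisGame_univ hkn]
  by_cases hk : k ≤ T.card <;> by_cases hi : i ∈ T <;> simp [hk, hi]

theorem SatisfiesAxioms.unique {k : ℕ} (hkn : k ≤ Fintype.card α)
    {Φ Ψ : (Finset α → ℝ) → α → ℝ} (hΦ : SatisfiesAxioms k Φ) (hΨ : SatisfiesAxioms k Ψ)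
    {v : Finset α → ℝ} (hv : v ∅ = 0) (i : α) : Φ v i = Ψ v i := by
  obtain ⟨hΦe, hΦs, hΦl, hΦn⟩ := hΦ
  obtain ⟨hΨe, hΨs, hΨl, hΨn⟩ := hΨ
  have hdecomp : v = fun S => ∑ T ∈ univ.erase ∅, kBasisCoeff k v T * kBasisGame k T S :=
    funext fun S => (sum_kBasisCoeff_mul_kBasisGame k hv S).symm
  have hne : ∀ T ∈ (univ : Finset (Finset α)).erase ∅, T.Nonempty :=
    fun T hT => nonempty_iff_ne_empty.2 (ne_of_mem_erase hT)
  have h₀ : ∀ T ∈ (univ : Finset (Finset α)).erase ∅, kBasisGame k T ∅ = 0 :=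
    fun T hT => kBasisGame_empty k (hne T hT)
  rw [hdecomp, hΦl.map_sum _ _ _ h₀, hΨl.map_sum _ _ _ h₀]
  refine sum_congr rfl fun T hT => ?_
  rw [apply_kBasisGame hkn hΦe hΦs hΦn (hne T hT), apply_kBasisGame hkn hΨe hΨs hΨn (hne T hT)]

theorem apply_map_swap_of_forall_insert_eq {v : Finset α → ℝ} {i j : α}
    (hij : ∀ S ∈ (univ \ {i, j} : Finset α).powerset, v (insert i S) = v (insert j S))
    (S : Finset α) : v (S.map (Equiv.swap i j).toEmbedding) = v S := by
  have hmem : ∀ U : Finset α, i ∉ U → j ∉ U → U ∈ (univ \ {i, j} : Finset α).powerset :=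
    fun U hi hj => mem_powerset.2 fun x hx => by
      simp only [mem_sdiff, mem_univ, mem_insert, mem_singleton, true_and]
      rintro (rfl | rfl) <;> contradiction
  have hfix : ∀ U : Finset α, (i ∈ U ↔ j ∈ U) → U.map (Equiv.swap i j).toEmbedding = U := by
    intro U hU
    refine map_eq_of_subset fun x hx => ?_
    rw [mem_map_equiv, Equiv.symm_swap, Equiv.swap_apply_def] at hx
    split_ifs at hx with hxi hxj
    · exact hxi ▸ hU.2 hx
    · exact hxj ▸ hU.1 hx
    · exact hx
  by_cases hiff : i ∈ S ↔ j ∈ S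
  · rw [hfix S hiff]
  obtain ⟨hi, hj⟩ | ⟨hi, hj⟩ : (i ∈ S ∧ j ∉ S) ∨ (i ∉ S ∧ j ∈ S) := by tauto
  · have hiU : i ∉ S.erase i := notMem_erase i S
    have hjU : j ∉ S.erase i := fun h => hj (mem_of_mem_erase h)
    rw [← insert_erase hi, map_insert, Equiv.coe_toEmbedding, Equiv.swap_apply_left,
      hfix _ (iff_of_false hiU hjU), hij _ (hmem _ hiU hjU)]
  · have hiU : i ∉ S.erase j := fun h => hi (mem_of_mem_erase h)
    have hjU : j ∉ S.erase j := notMem_erase j S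
    rw [← insert_erase hj, map_insert, Equiv.coe_toEmbedding, Equiv.swap_apply_right,
      hfix _ (iff_of_false hiU hjU), hij _ (hmem _ hiU hjU)]

theorem sum_sum_powerset_erase {M : Type*} [AddCommMonoid M] (f : Finset α → M) :
    ∑ i, ∑ S ∈ (univ.erase i).powerset, f S = ∑ S, Sᶜ.card • f S := by
  rw [sum_comm' (t' := univ) (s' := fun S => Sᶜ)]
  · simp only [sum_const]
  · intro i S
    simp [subset_erase]

theorem sum_sum_powerset_erase_insert {M : Type*} [AddCommGroup M] (f : Finset α → M) :
    ∑ i, ∑ S ∈ (univ.erase i).powerset, f (insert i S) = ∑ T, T.card • f T := by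
  have h : ∀ i, ∑ S ∈ (univ.erase i).powerset, f (insert i S) =
      ∑ T, f T - ∑ S ∈ (univ.erase i).powerset, f S := fun i => by
    rw [eq_sub_iff_add_eq, add_comm, ← sum_powerset_insert (notMem_erase i univ),
      insert_erase (mem_univ i), powerset_univ]
  rw [sum_congr rfl fun i _ => h i, sum_sub_distrib, sum_sum_powerset_erase, sum_const,
    card_univ, smul_sum, ← sum_sub_distrib]
  refine sum_congr rfl fun T _ => ?_
  rw [← card_add_card_compl T, add_nsmul, add_sub_cancel_right]

end Values

section kSED

variable {n k : ℕ}

theorem kSED_isLinear : IsLinear (kSED n k) := by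
  intro u w _ _ γ η i
  rw [kSED, kSED, kSED, mul_add, mul_add, add_add_add_comm]
  simp only [mul_sum, ← sum_add_distrib]
  congr 1 <;> exact sum_congr rfl fun S _ => by ring

theorem kSED_hasKNullifyingNullPlayerProperty (hk : 1 ≤ k) :
    HasKNullifyingNullPlayerProperty k (kSED n k) := by
  intro v _ i h₁ h₂
  rw [kSED, sum_eq_zero, sum_eq_zero, add_zero] <;> intro S hS <;> rw [mem_filter] at hS
  · rw [h₂ S hS.1 hS.2, sub_self, mul_zero]
  · rw [h₁ S hS.1 (by omega), mul_zero]

theorem kSED_map_perm (σ : Equiv.Perm (Fin n)) (v : Finset (Fin n) → ℝ) (i : Fin n) :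
    kSED n k (fun S => v (S.map σ.toEmbedding)) i = kSED n k v (σ i) := by
  have hmem : ∀ (p : ℕ → Prop) [DecidablePred p] (S : Finset (Fin n)),
      S ∈ (univ.erase i).powerset.filter (fun S => p S.card) ↔
        σ.finsetCongr S ∈ (univ.erase (σ i)).powerset.filter (fun S => p S.card) := by
    intro p _ S
    simp [subset_erase]
  unfold kSED
  congr 1
  · exact sum_equiv σ.finsetCongr (hmem (· = k - 1)) fun S _ => by simp [map_insert]
  · exact sum_equiv σ.finsetCongr (hmem (k ≤ ·)) fun S _ => by simp [map_insert]

theorem kSED_isSymmetric : IsSymmetric (kSED n k) := by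
  intro v _ i j hij
  have := kSED_map_perm (k := k) (Equiv.swap i j) v i
  rwa [Equiv.swap_apply_left, funext (apply_map_swap_of_forall_insert_eq hij)] at this

noncomputable def kSEDWeight (n k t : ℕ) : ℝ :=
  if k ≤ t then ((n - t).factorial * (t - 1).factorial : ℝ) / n.factorial else 0

theorem kSED_eq_sum_powerset_erase (hk : 1 ≤ k) (v : Finset (Fin n) → ℝ) (i : Fin n) :
    kSED n k v i = ∑ S ∈ (univ.erase i).powerset,
      (kSEDWeight n k (insert i S).card * v (insert i S) -
        kSEDWeight n (k + 1) (S.card + 1) * v S) := by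
  rw [kSED, sum_filter, sum_filter, ← sum_add_distrib]
  refine sum_congr rfl fun S hS => ?_
  have hiS : i ∉ S := fun h => (notMem_erase i univ) (mem_powerset.1 hS h)
  rw [card_insert_of_notMem hiS, kSEDWeight, kSEDWeight, Nat.add_sub_cancel,
    Nat.sub_sub]
  by_cases h₁ : k ≤ S.card
  · rw [if_neg (by omega), if_pos h₁, if_pos (by omega), if_pos (by omega)]
    ring
  by_cases h₂ : S.card = k - 1
  · obtain rfl : k = S.card + 1 := by omega
    simp [mul_comm]
  · rw [if_neg h₂, if_neg h₁, if_neg (by omega), if_neg (by omega)]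
    ring

theorem card_mul_kSEDWeight_sub (hk : 1 ≤ k) (hkn : k ≤ n) {t : ℕ} (ht : t ≤ n) :
    t * kSEDWeight n k t - ((n - t : ℕ) : ℝ) * kSEDWeight n (k + 1) (t + 1) =
      if t = n then 1 else 0 := by
  have hn : (n.factorial : ℝ) ≠ 0 := Nat.cast_ne_zero.2 n.factorial_ne_zero
  unfold kSEDWeight
  by_cases hkt : k ≤ t
  · rw [if_pos hkt, if_pos (by omega), Nat.add_sub_cancel]
    have ht' : (t : ℝ) * (t - 1).factorial = t.factorial := by
      exact_mod_cast Nat.mul_factorial_pred (by omega)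
    split_ifs with htn
    · subst htn
      field_simp
      rw [Nat.sub_self, ← ht']
      simp
    · have hnt : ((n - t : ℕ) : ℝ) * (n - (t + 1)).factorial = (n - t).factorial := by
        rw [← Nat.sub_sub]; exact_mod_cast Nat.mul_factorial_pred (by omega)
      rw [← ht', ← hnt]
      ring
  · rw [if_neg hkt, if_neg (by omega), if_neg (by omega)]
    ring

theorem kSED_isEfficient (hk : 1 ≤ k) (hkn : k ≤ n) : IsEfficient (kSED n k) := by
  intro v _
  simp_rw [kSED_eq_sum_powerset_erase hk, sum_sub_distrib]
  rw [sum_sum_powerset_erase_insert (fun T => kSEDWeight n k T.card * v T),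
    sum_sum_powerset_erase (fun S => kSEDWeight n (k + 1) (S.card + 1) * v S),
    ← sum_sub_distrib, ← Fintype.sum_ite_eq' univ v]
  refine sum_congr rfl fun T _ => ?_
  have hT : T.card ≤ n := card_le_univ T |>.trans_eq (Fintype.card_fin n)
  rw [nsmul_eq_mul, nsmul_eq_mul, ← mul_assoc, ← mul_assoc, ← sub_mul, card_compl,
    Fintype.card_fin, card_mul_kSEDWeight_sub hk hkn hT, ite_mul, one_mul, zero_mul]
  simp only [← card_eq_iff_eq_univ, Fintype.card_fin]

theorem kSED_satisfiesAxioms (hk : 1 ≤ k) (hkn : k ≤ n) : SatisfiesAxioms k (kSED n k) :=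
  ⟨kSED_isEfficient hk hkn, kSED_isSymmetric, kSED_isLinear,
    kSED_hasKNullifyingNullPlayerProperty hk⟩

end kSED

end TUGame

theorem kSED_characterization_ESL_NNPP_general (n k : ℕ) (hk : 1 ≤ k) (hkn : k ≤ n)
    (Φ : (Finset (Fin n) → ℝ) → Fin n → ℝ) :
    ((∀ v : Finset (Fin n) → ℝ, v ∅ = 0 → ∑ i, Φ v i = v Finset.univ) ∧
     (∀ v : Finset (Fin n) → ℝ, v ∅ = 0 → ∀ i j : Fin n,
        (∀ S ∈ (Finset.univ \ {i, j} : Finset (Fin n)).powerset,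
          v (insert i S) = v (insert j S)) → Φ v i = Φ v j) ∧
     (∀ u w : Finset (Fin n) → ℝ, u ∅ = 0 → w ∅ = 0 → ∀ γ η : ℝ, ∀ i : Fin n,
        Φ (fun S => γ * u S + η * w S) i = γ * Φ u i + η * Φ w i) ∧
     (∀ v : Finset (Fin n) → ℝ, v ∅ = 0 → ∀ i : Fin n,
        (∀ S ∈ (Finset.univ.erase i).powerset, S.card < k → v (insert i S) = 0) →
        (∀ S ∈ (Finset.univ.erase i).powerset, k ≤ S.card → v (insert i S) = v S) →
        Φ v i = 0))
    ↔ (∀ v : Finset (Fin n) → ℝ, v ∅ = 0 → ∀ i : Fin n, Φ v i = kSED n k v i) := by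
  have hkSED := TUGame.kSED_satisfiesAxioms hk hkn
  exact ⟨fun hΦ v hv i => TUGame.SatisfiesAxioms.unique (by simpa using hkn) hΦ hkSED hv i,
    fun h => hkSED.congr h⟩

/-- a value satisfies Eff, Sym, Lin and the `k`-NNPP
iff it is the `k`-SED value. -/
theorem kSED_characterization_ESL_NNPP (n k : ℕ) (hn : 1 ≤ n) (hk : 1 ≤ k) (hkn : k ≤ n)
    (Φ : (Finset (Fin n) → ℝ) → Fin n → ℝ) :
    ((∀ v : Finset (Fin n) → ℝ, v ∅ = 0 → ∑ i, Φ v i = v Finset.univ) ∧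
     (∀ v : Finset (Fin n) → ℝ, v ∅ = 0 → ∀ i j : Fin n,
        (∀ S ∈ (Finset.univ \ {i, j} : Finset (Fin n)).powerset,
          v (insert i S) = v (insert j S)) → Φ v i = Φ v j) ∧
     (∀ u w : Finset (Fin n) → ℝ, u ∅ = 0 → w ∅ = 0 → ∀ γ η : ℝ, ∀ i : Fin n,
        Φ (fun S => γ * u S + η * w S) i = γ * Φ u i + η * Φ w i) ∧
     (∀ v : Finset (Fin n) → ℝ, v ∅ = 0 → ∀ i : Fin n,
        (∀ S ∈ (Finset.univ.erase i).powerset, S.card < k → v (insert i S) = 0) →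
        (∀ S ∈ (Finset.univ.erase i).powerset, k ≤ S.card → v (insert i S) = v S) →
        Φ v i = 0))
    ↔ (∀ v : Finset (Fin n) → ℝ, v ∅ = 0 → ∀ i : Fin n, Φ v i = kSED n k v i) :=
  kSED_characterization_ESL_NNPP_general n k hk hkn Φ
end

section
/- For every TU game v, Φ^{k-SED}(v) = Φ^{ED}(v_{<k}) + Φ^{Sh}(v_{≥k}), where v_{<k}(S) = v(S) for |S| < k and 0 otherwise, and v_{≥k}(S) = v(S) for |S| ≥ k and 0 otherwise. -/
/-!
Since `|N| = n ≥ k`, the game `v_{<k}` vanishes on the grand coalition, so its equal division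
is zero. Comparing the Shapley value of `v_{≥k}` with the `k`-SED value coalition by coalition,
the marginal contribution `v_{≥k}(S ∪ {i}) - v_{≥k}(S)` of `i ∉ S` is `0` when `|S| < k - 1`,
the stand-alone worth `v(S ∪ {i})` when `|S| = k - 1`, and `v(S ∪ {i}) - v(S)` when `|S| ≥ k`.
-/

open Finset

theorem marginal_ite_le_card {α : Type*} [DecidableEq α] (v : Finset α → ℝ) {k : ℕ}
    (hk : 1 ≤ k) {S : Finset α} {i : α} (hi : i ∉ S) :
    (if k ≤ (insert i S).card then v (insert i S) else 0) - (if k ≤ S.card then v S else 0) =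
      (if S.card = k - 1 then v (insert i S) else 0) +
        (if k ≤ S.card then v (insert i S) - v S else 0) := by
  rw [card_insert_of_notMem hi]
  rcases lt_trichotomy S.card (k - 1) with h | h | h
  · simp only [if_neg (show ¬k ≤ S.card + 1 by omega), if_neg (show ¬k ≤ S.card by omega),
      if_neg (show S.card ≠ k - 1 by omega)]
    ring
  · simp only [if_pos (show k ≤ S.card + 1 by omega), if_neg (show ¬k ≤ S.card by omega),
      if_pos h]
    ring
  · simp only [if_pos (show k ≤ S.card + 1 by omega), if_pos (show k ≤ S.card by omega),
      if_neg (show S.card ≠ k - 1 by omega)]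
    ring

theorem shapley_ite_le_card (n : ℕ) {k : ℕ} (hk : 1 ≤ k) (v : Finset (Fin n) → ℝ) (i : Fin n) :
    shapley n (fun S => if k ≤ S.card then v S else 0) i =
      (∑ S ∈ (univ.erase i).powerset.filter (fun S => S.card = k - 1),
          ((S.card.factorial * (n - S.card - 1).factorial : ℝ) / n.factorial) * v (insert i S))
      + ∑ S ∈ (univ.erase i).powerset.filter (fun S => k ≤ S.card),
          ((S.card.factorial * (n - S.card - 1).factorial : ℝ) / n.factorial) *
            (v (insert i S) - v S) := by
  rw [shapley, sum_filter, sum_filter, ← sum_add_distrib]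
  refine sum_congr rfl fun S hS => ?_
  have hi : i ∉ S := fun h => (mem_erase.mp (mem_powerset.mp hS h)).1 rfl
  rw [marginal_ite_le_card v hk hi, mul_add, mul_ite, mul_ite, mul_zero]

theorem kSED_eq_ED_add_shapley_general (n k : ℕ) (hk : 1 ≤ k) (hkn : k ≤ n)
    (v : Finset (Fin n) → ℝ) (i : Fin n) :
    kSED n k v i =
      (fun S : Finset (Fin n) => if S.card < k then v S else 0) Finset.univ / n
        + shapley n (fun S => if k ≤ S.card then v S else 0) i := by
  have hED : (if (univ : Finset (Fin n)).card < k then v univ else 0) / n = 0 := by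
    rw [card_univ, Fintype.card_fin, if_neg (by omega), zero_div]
  rw [hED, zero_add, shapley_ite_le_card n hk, kSED]
  congr 1
  · refine sum_congr rfl fun S hS => ?_
    rw [(mem_filter.mp hS).2, show n - (k - 1) - 1 = n - k by omega,
      mul_comm ((n - k).factorial : ℝ)]
  · exact sum_congr rfl fun S _ => by rw [mul_comm ((n - S.card - 1).factorial : ℝ)]

/-- `Φ^{k-SED}(v) = Φ^{ED}(v_{<k}) + Φ^{Sh}(v_{≥k})`. -/
theorem kSED_eq_ED_add_shapley (n k : ℕ) (hk : 1 ≤ k) (hkn : k ≤ n)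
    (v : Finset (Fin n) → ℝ) (hv : v ∅ = 0) (i : Fin n) :
    kSED n k v i =
      (fun S : Finset (Fin n) => if S.card < k then v S else 0) Finset.univ / n
        + shapley n (fun S => if k ≤ S.card then v S else 0) i :=
  kSED_eq_ED_add_shapley_general n k hk hkn v i
end

section
/- The family W = {w_S : ∅ ≠ S ⊆ N} is a basis of the vector space of TU games on N, where w_S = e_S (the identity game of S) if |S| < k and w_S = u_S (the unanimity game of S) if |S| ≥ k. -/
open Finset

/-- The basis game `w_S`: the identity game `e_S` if `|S| < k`,
and the unanimity game `u_S` if `|S| ≥ k`. -/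
noncomputable def wGame (n k : ℕ) (S : Finset (Fin n)) : Finset (Fin n) → ℝ :=
  fun T => if S.card < k then (if T = S then 1 else 0) else (if S ⊆ T then 1 else 0)

/-! Both `e_S` and `u_S` equal `1` at `S` and vanish off the up-set of `S`, so the family
`(w_S)` is triangular with respect to inclusion and hence linearly independent. It lies in the
hyperplane of games vanishing at `∅`, whose dimension `2 ^ n - 1` is the number of nonempty
coalitions, so it spans that hyperplane. -/

theorem linearIndependent_of_triangular {ι α R : Type*} [Ring R] [NoZeroDivisors R]
    [PartialOrder ι] (v : ι → α → R) (e : ι → α) (hdiag : ∀ i, v i (e i) ≠ 0)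
    (htri : ∀ i j, v i (e j) ≠ 0 → i ≤ j) : LinearIndependent R v := by
  classical
  rw [linearIndependent_iff']
  intro s g hsum i hi
  by_contra hgi
  obtain ⟨m, hmin⟩ := (s.filter (g · ≠ 0)).exists_minimal ⟨i, mem_filter.mpr ⟨hi, hgi⟩⟩
  obtain ⟨hms, hgm⟩ := mem_filter.mp hmin.prop
  have heval := congrFun hsum (e m)
  rw [Finset.sum_apply, Finset.sum_eq_single m] at heval
  · exact mul_ne_zero hgm (hdiag m) heval
  · intro j hjs hjm
    by_cases hgj : g j = 0
    · simp [hgj]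
    · have hvj : v j (e m) = 0 := by
        by_contra hvj
        exact hjm (hmin.eq_of_le (mem_filter.mpr ⟨hjs, hgj⟩) (htri j m hvj))
      simp [hvj]
  · exact fun h => absurd hms h

theorem Fintype.card_subtype_finset_ne_empty (α : Type*) [Fintype α] [DecidableEq α] :
    Fintype.card {S : Finset α // S ≠ ∅} = 2 ^ Fintype.card α - 1 := by
  rw [Fintype.card_subtype_compl, Fintype.card_subtype_eq, Fintype.card_finset]

theorem finrank_ker_proj (K α : Type*) [Field K] [Fintype α] (a : α) :
    Module.finrank K (LinearMap.ker (LinearMap.proj a : (α → K) →ₗ[K] K)) =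
      Fintype.card α - 1 := by
  have hproj : (LinearMap.proj a : (α → K) →ₗ[K] K) ≠ 0 := fun h => by
    simpa using LinearMap.congr_fun h (fun _ => 1)
  have := Module.Dual.finrank_ker_add_one_of_ne_zero hproj
  rw [Module.finrank_fintype_fun_eq_card] at this
  omega

theorem wGame_self (n k : ℕ) (S : Finset (Fin n)) : wGame n k S S = 1 := by
  unfold wGame; split_ifs <;> simp_all

theorem subset_of_wGame_ne_zero {n k : ℕ} {S T : Finset (Fin n)} (h : wGame n k S T ≠ 0) :
    S ⊆ T := by
  unfold wGame at h
  split_ifs at h <;> simp_all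

theorem wGame_apply_empty {n k : ℕ} {S : Finset (Fin n)} (hS : S ≠ ∅) : wGame n k S ∅ = 0 := by
  by_contra h
  exact hS (subset_empty.mp (subset_of_wGame_ne_zero h))

theorem wGame_basis_general (n k : ℕ) :
    LinearIndependent ℝ (fun S : {S : Finset (Fin n) // S ≠ ∅} => wGame n k S.1) ∧
    Submodule.span ℝ (Set.range (fun S : {S : Finset (Fin n) // S ≠ ∅} => wGame n k S.1)) =
      LinearMap.ker (LinearMap.proj (∅ : Finset (Fin n)) :
        (Finset (Fin n) → ℝ) →ₗ[ℝ] ℝ) := by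
  have hli : LinearIndependent ℝ (fun S : {S : Finset (Fin n) // S ≠ ∅} => wGame n k S.1) :=
    linearIndependent_of_triangular _ Subtype.val (fun S => by simp [wGame_self])
      (fun _ _ h => subset_of_wGame_ne_zero h)
  refine ⟨hli, Submodule.eq_of_le_of_finrank_eq ?_ ?_⟩
  · rw [Submodule.span_le]
    rintro _ ⟨S, rfl⟩
    exact wGame_apply_empty S.2
  · rw [finrank_span_eq_card hli, Fintype.card_subtype_finset_ne_empty, finrank_ker_proj,
      Fintype.card_finset, Fintype.card_fin]

/-- the family `{w_S : ∅ ≠ S ⊆ N}` is a basis of the space of TU games,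
i.e. it is linearly independent and spans the subspace of functions vanishing at `∅`. -/
theorem wGame_basis (n k : ℕ) (hn : 1 ≤ n) (hk : 1 ≤ k) (hkn : k ≤ n) :
    LinearIndependent ℝ (fun S : {S : Finset (Fin n) // S ≠ ∅} => wGame n k S.1) ∧
    Submodule.span ℝ (Set.range (fun S : {S : Finset (Fin n) // S ≠ ∅} => wGame n k S.1)) =
      LinearMap.ker (LinearMap.proj (∅ : Finset (Fin n)) :
        (Finset (Fin n) → ℝ) →ₗ[ℝ] ℝ) :=
  wGame_basis_general n k
end

section
/- A value Φ on TU games satisfies efficiency, symmetry, and coalitional k-strategic equivalence if and only if Φ = Φ^{k-SED}. -/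
open Finset

/-!
The `k`-SED value is the Shapley value of the game truncated below size `k`, which gives
efficiency and symmetry; invariance under adding a game in which `i` is a `k`-nullifying null
player is visible in its formula.

For uniqueness, `Ψ = Φ - Φ^{k-SED}` sums to zero, is symmetric and has the same invariance. Every
game vanishing on `∅` is a combination of the games `δ_T` (`|T| < k`) and `u_T` (`|T| ≥ k`) over
nonempty `T`, and each player outside `T` is a `k`-nullifying null player of the `T`-th one.
Induct on the set `F` of coalitions used: a player outside some `T ∈ F` does not see the `T`-term,
so `Ψ` vanishes there by induction; the players in every `T ∈ F` are pairwise symmetric, so `Ψ` is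
constant on them, and the zero sum forces that constant to be `0`.
-/

namespace TUGame

variable {α : Type*} [DecidableEq α]

def basisGame (k : ℕ) (T S : Finset α) : ℝ :=
  if T.card < k then (if S = T then 1 else 0) else (if T ⊆ S then 1 else 0)

lemma basisGame_eq_zero_of_not_subset {k : ℕ} {T S : Finset α} (h : ¬T ⊆ S) :
    basisGame k T S = 0 := by
  unfold basisGame
  split_ifs with _ hST <;> first | rfl | exact absurd (hST ▸ subset_refl S) h

lemma sum_smul_basisGame_apply_eq_zero {k : ℕ} (c : Finset α → ℝ) {F : Finset (Finset α)}
    {S : Finset α} (h : ∀ T ∈ F, ¬T ⊆ S) : (∑ T ∈ F, c T • basisGame k T) S = 0 := by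
  simp only [Finset.sum_apply, Pi.smul_apply, smul_eq_mul]
  exact sum_eq_zero fun T hT => by rw [basisGame_eq_zero_of_not_subset (h T hT), mul_zero]

lemma sum_powerset_sum_powerset_mu (g : Finset α → ℝ) (S : Finset α) :
    ∑ T ∈ S.powerset, ∑ R ∈ T.powerset, IncidenceAlgebra.mu ℝ R T * g R = g S := by
  rw [sum_comm' (t' := S.powerset) (s' := fun R => Icc R S)]
  · simp_rw [← sum_mul, IncidenceAlgebra.sum_Icc_mu_right]
    simp
  · intro T R
    simp only [mem_powerset, mem_Icc]
    exact ⟨fun h => ⟨⟨h.2, h.1⟩, h.2.trans h.1⟩, fun h => ⟨h.1.2, h.1.1⟩⟩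

def truncate (k : ℕ) (v : Finset α → ℝ) (S : Finset α) : ℝ :=
  if k ≤ S.card then v S else 0

variable [Fintype α]

def IsSymmetricPair (v : Finset α → ℝ) (i j : α) : Prop :=
  ∀ S ∈ (univ \ {i, j} : Finset α).powerset, v (insert i S) = v (insert j S)

def IsNullifyingNull (k : ℕ) (w : Finset α → ℝ) (i : α) : Prop :=
  (∀ S ∈ (univ.erase i).powerset, S.card < k → w (insert i S) = 0) ∧
    (∀ S ∈ (univ.erase i).powerset, k ≤ S.card → w (insert i S) = w S)

lemma IsNullifyingNull.smul {k : ℕ} {w : Finset α → ℝ} {i : α} (h : IsNullifyingNull k w i)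
    (c : ℝ) : IsNullifyingNull k (c • w) i :=
  ⟨fun S hS hSk => by simp [h.1 S hS hSk], fun S hS hSk => by simp [h.2 S hS hSk]⟩

lemma isNullifyingNull_basisGame {k : ℕ} {T : Finset α} {i : α} (hi : i ∉ T) :
    IsNullifyingNull k (basisGame k T) i := by
  have hne : ∀ S, insert i S ≠ T := fun S h => hi (h ▸ mem_insert_self i S)
  refine ⟨fun S _ hSk => ?_, fun S _ hSk => ?_⟩ <;>
    simp only [basisGame, hne, subset_insert_iff_of_notMem hi, if_false]
  · split_ifs with hT hTS
    · rfl
    · have := card_le_card hTS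
      omega
    · rfl
  · split_ifs with hT hS <;> first | rfl | (subst hS; omega)

lemma univ_erase_eq_insert_sdiff_pair {i j : α} (hij : i ≠ j) :
    univ.erase i = insert j (univ \ {i, j}) := by
  ext x
  simp only [mem_erase, mem_insert, mem_sdiff, mem_univ, true_and, mem_singleton, and_true]
  grind

lemma IsSymmetricPair.truncate {k : ℕ} {v : Finset α → ℝ} {i j : α}
    (h : IsSymmetricPair v i j) :
    IsSymmetricPair (truncate k v) i j := by
  intro S hS
  have hS' := mem_powerset.1 hS
  have hiS : i ∉ S := fun h' => by simpa using hS' h'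
  have hjS : j ∉ S := fun h' => by simpa using hS' h'
  simp only [TUGame.truncate, card_insert_of_notMem hiS, card_insert_of_notMem hjS, h S hS]

open IncidenceAlgebra in
lemma exists_eq_sum_basisGame (k : ℕ) (v : Finset α → ℝ) :
    ∃ c : Finset α → ℝ, v = ∑ T, c T • basisGame k T := by
  set m : Finset α → ℝ := fun T => ∑ R ∈ T.powerset, mu ℝ R T * truncate k v R
  have hm : ∀ T : Finset α, T.card < k → m T = 0 := fun T hT =>
    sum_eq_zero fun R hR => by
      simp [truncate, ((card_le_card (mem_powerset.1 hR)).trans_lt hT).not_ge]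
  refine ⟨fun T => if T.card < k then v T else m T, funext fun S => ?_⟩
  have hterm : ∀ T, (if T.card < k then v T else m T) * basisGame k T S
      = (if S = T then (if T.card < k then v T else 0) else 0) + (if T ⊆ S then m T else 0) := by
    intro T
    unfold basisGame
    split_ifs <;> simp_all
  simp only [Finset.sum_apply, Pi.smul_apply, smul_eq_mul, hterm, sum_add_distrib, sum_ite_eq,
    mem_univ, if_true, ← sum_filter, filter_subset_univ, m, sum_powerset_sum_powerset_mu]
  unfold truncate
  split_ifs <;> first | (exfalso; omega) | simp

lemma exists_eq_sum_erase_empty_basisGame (k : ℕ) {v : Finset α → ℝ} (hv : v ∅ = 0) :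
    ∃ c : Finset α → ℝ, v = ∑ T ∈ univ.erase ∅, c T • basisGame k T := by
  obtain ⟨c, hc⟩ := exists_eq_sum_basisGame k v
  have hrest : (∑ T ∈ univ.erase ∅, c T • basisGame k T) ∅ = 0 :=
    sum_smul_basisGame_apply_eq_zero c fun T hT h => (mem_erase.1 hT).1 (subset_empty.1 h)
  have hc₀ : c ∅ = 0 := by
    have := congrFun hc ∅
    rw [← add_sum_erase _ _ (mem_univ ∅), Pi.add_apply, hrest, hv] at this
    simpa [basisGame] using this.symm
  refine ⟨c, ?_⟩
  rw [hc, ← add_sum_erase _ _ (mem_univ ∅), hc₀, zero_smul, zero_add]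

lemma eq_zero_of_sum_eq_zero_of_eq_on {x : α → ℝ} (hsum : ∑ i, x i = 0) (B : Finset α)
    (hB : ∀ i ∈ B, ∀ j ∈ B, x i = x j) (hout : ∀ j ∉ B, x j = 0) : x = 0 := by
  funext i
  by_cases hi : i ∈ B
  · have hsumB : ∑ j, x j = B.card * x i := by
      rw [← sum_subset (subset_univ B) fun j _ hj => hout j hj,
        sum_congr rfl fun j hj => hB j hj i hi, sum_const, nsmul_eq_mul]
    rw [hsumB] at hsum
    exact (mul_eq_zero.1 hsum).resolve_left (Nat.cast_ne_zero.2 (card_ne_zero_of_mem hi))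
  · exact hout i hi

section Uniqueness

variable {k : ℕ} {Ψ : (Finset α → ℝ) → α → ℝ}

lemma apply_sum_smul_basisGame_eq_zero (hsum : ∀ v, v ∅ = 0 → ∑ i, Ψ v i = 0)
    (hsym : ∀ v, v ∅ = 0 → ∀ i j, IsSymmetricPair v i j → Ψ v i = Ψ v j)
    (hcse : ∀ v w, v ∅ = 0 → w ∅ = 0 → ∀ i, IsNullifyingNull k w i →
      Ψ (v + w) i = Ψ v i)
    (c : Finset α → ℝ) (F : Finset (Finset α)) (hF : ∅ ∉ F) :
    Ψ (∑ T ∈ F, c T • basisGame k T) = 0 := by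
  induction F using Finset.strongInduction with
  | H F ih =>
  set v := ∑ T ∈ F, c T • basisGame k T
  have hv : v ∅ = 0 :=
    sum_smul_basisGame_apply_eq_zero c fun T hT h => hF (subset_empty.1 h ▸ hT)
  refine eq_zero_of_sum_eq_zero_of_eq_on (hsum v hv) (univ.filter fun i => ∀ T ∈ F, i ∈ T)
    (fun i hi j hj => hsym v hv i j fun S hS => ?_) (fun j hj => ?_)
  · have hvanish : ∀ a b, b ∉ insert a S → (∀ T ∈ F, b ∈ T) → v (insert a S) = 0 :=
      fun a b hb hbF => sum_smul_basisGame_apply_eq_zero c fun T hT h => hb (h (hbF T hT))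
    have hS' := mem_powerset.1 hS
    rcases eq_or_ne i j with rfl | hij
    · rfl
    have hiS : i ∉ S := fun h => by simpa using hS' h
    have hjS : j ∉ S := fun h => by simpa using hS' h
    rw [hvanish i j (by simp [hij.symm, hjS]) (mem_filter.1 hj).2,
      hvanish j i (by simp [hij, hiS]) (mem_filter.1 hi).2]
  · obtain ⟨T, hT, hjT⟩ : ∃ T ∈ F, j ∉ T := by simpa using hj
    have hsplit : v = (∑ T' ∈ F.erase T, c T' • basisGame k T') + c T • basisGame k T :=
      (sum_erase_add F _ hT).symm
    have hw : (c T • basisGame k T) ∅ = 0 := by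
      simp [basisGame_eq_zero_of_not_subset fun h => hF (subset_empty.1 h ▸ hT)]
    have hv' : (∑ T' ∈ F.erase T, c T' • basisGame k T') ∅ = 0 := by
      rw [hsplit] at hv
      simpa [hw] using hv
    rw [hsplit, hcse _ _ hv' hw j ((isNullifyingNull_basisGame hjT).smul _),
      ih _ (erase_ssubset hT) fun h => hF (mem_of_mem_erase h)]
    rfl

lemma eq_zero_of_sum_eq_zero_of_symm_of_cse (hsum : ∀ v, v ∅ = 0 → ∑ i, Ψ v i = 0)
    (hsym : ∀ v, v ∅ = 0 → ∀ i j, IsSymmetricPair v i j → Ψ v i = Ψ v j)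
    (hcse : ∀ v w, v ∅ = 0 → w ∅ = 0 → ∀ i, IsNullifyingNull k w i →
      Ψ (v + w) i = Ψ v i)
    {v : Finset α → ℝ} (hv : v ∅ = 0) : Ψ v = 0 := by
  obtain ⟨c, rfl⟩ := exists_eq_sum_erase_empty_basisGame k hv
  exact apply_sum_smul_basisGame_eq_zero hsum hsym hcse c _ (notMem_erase ∅ univ)

end Uniqueness

section Shapley

variable {n : ℕ}

noncomputable def shapleyWeight (n s : ℕ) : ℝ :=
  (s.factorial * (n - s - 1).factorial : ℝ) / n.factorial

lemma mul_shapleyWeight_pred {s : ℕ} (hs : s ≠ 0) :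
    s * shapleyWeight n (s - 1) = (s.factorial * (n - s).factorial : ℝ) / n.factorial := by
  rw [shapleyWeight, show n - (s - 1) - 1 = n - s by omega, ← Nat.mul_factorial_pred hs]
  push_cast
  ring

lemma sub_mul_shapleyWeight {s : ℕ} (hs : s < n) :
    ((n - s : ℕ) : ℝ) * shapleyWeight n s
      = (s.factorial * (n - s).factorial : ℝ) / n.factorial := by
  rw [shapleyWeight, ← Nat.mul_factorial_pred (show n - s ≠ 0 by omega)]
  push_cast
  ring

lemma shapley_eq_sum_ite (v : Finset (Fin n) → ℝ) (i : Fin n) :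
    shapley n v i = ∑ R, if i ∈ R then shapleyWeight n (R.card - 1) * v R
      else -(shapleyWeight n R.card * v R) := by
  have hi : i ∉ univ.erase i := notMem_erase i univ
  rw [← powerset_univ, ← insert_erase (mem_univ i), sum_powerset_insert hi, add_comm,
    ← sum_add_distrib, shapley]
  refine sum_congr rfl fun S hS => ?_
  have hiS : i ∉ S := fun h => hi (mem_powerset.1 hS h)
  rw [if_pos (mem_insert_self i S), if_neg hiS, card_insert_of_notMem hiS, Nat.add_sub_cancel,
    shapleyWeight]
  ring

lemma sum_ite_mem_shapleyWeight (v : Finset (Fin n) → ℝ) (R : Finset (Fin n)) :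
    (∑ i, if i ∈ R then shapleyWeight n (R.card - 1) * v R else -(shapleyWeight n R.card * v R))
      = (R.card * shapleyWeight n (R.card - 1)
          - ((n - R.card : ℕ) : ℝ) * shapleyWeight n R.card) * v R := by
  rw [sum_ite, sum_const, sum_const, filter_mem_eq_inter, univ_inter, filter_not,
    filter_mem_eq_inter, univ_inter, card_univ_sdiff, Fintype.card_fin, nsmul_eq_mul, nsmul_eq_mul]
  ring

lemma card_mul_shapleyWeight_pred_sub {R : Finset (Fin n)} (hR : R ≠ ∅) :
    R.card * shapleyWeight n (R.card - 1) - ((n - R.card : ℕ) : ℝ) * shapleyWeight n R.card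
      = if R = univ then 1 else 0 := by
  rw [mul_shapleyWeight_pred (card_ne_zero.2 (nonempty_iff_ne_empty.2 hR))]
  split_ifs with hRu
  · subst hRu
    rw [card_univ, Fintype.card_fin, Nat.sub_self]
    field_simp
    simp
  · rw [sub_mul_shapleyWeight ((card_lt_iff_ne_univ R).2 hRu |>.trans_eq (Fintype.card_fin n)),
      sub_self]

lemma sum_shapley (v : Finset (Fin n) → ℝ) (hv : v ∅ = 0) :
    ∑ i, shapley n v i = v univ := by
  simp_rw [shapley_eq_sum_ite]
  rw [sum_comm, sum_congr rfl fun R _ => sum_ite_mem_shapleyWeight v R]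
  have hterm : ∀ R : Finset (Fin n), (R.card * shapleyWeight n (R.card - 1)
      - ((n - R.card : ℕ) : ℝ) * shapleyWeight n R.card) * v R
        = if R = univ then v R else 0 := by
    intro R
    rcases eq_or_ne R ∅ with rfl | hR
    · simp [hv]
    · rw [card_mul_shapleyWeight_pred_sub hR, ite_mul, one_mul, zero_mul]
  simp only [hterm, sum_ite_eq', mem_univ, if_true]

lemma shapley_eq_of_isSymmetricPair {v : Finset (Fin n) → ℝ} {i j : Fin n}
    (h : IsSymmetricPair v i j) : shapley n v i = shapley n v j := by
  rcases eq_or_ne i j with rfl | hij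
  · rfl
  have hi : i ∉ (univ \ {i, j} : Finset (Fin n)) := by simp
  have hj : j ∉ (univ \ {i, j} : Finset (Fin n)) := by simp
  rw [shapley, shapley, univ_erase_eq_insert_sdiff_pair hij,
    univ_erase_eq_insert_sdiff_pair hij.symm, pair_comm j i, sum_powerset_insert hj,
    sum_powerset_insert hi]
  congr 1 <;> refine sum_congr rfl fun S hS => ?_
  · rw [h S hS]
  · have hiS : i ∉ S := fun h' => hi (mem_powerset.1 hS h')
    have hjS : j ∉ S := fun h' => hj (mem_powerset.1 hS h')
    rw [card_insert_of_notMem hiS, card_insert_of_notMem hjS, insert_comm, h S hS]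

end Shapley

section KSED

variable {n k : ℕ}

lemma kSED_eq_shapley_truncate (hk : 1 ≤ k) (v : Finset (Fin n) → ℝ) (i : Fin n) :
    kSED n k v i = shapley n (truncate k v) i := by
  rw [kSED, shapley, sum_filter, sum_filter, ← sum_add_distrib]
  refine sum_congr rfl fun S hS => ?_
  have hiS : i ∉ S := fun h => notMem_erase i univ (mem_powerset.1 hS h)
  simp only [truncate, card_insert_of_notMem hiS]
  split_ifs with hS₁ hS₂ <;> first | (exfalso; omega) | skip
  · rw [hS₁, show n - (k - 1) - 1 = n - k by omega]
    ring
  all_goals ring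

lemma sum_kSED (hk : 1 ≤ k) (hkn : k ≤ n) (v : Finset (Fin n) → ℝ) (hv : v ∅ = 0) :
    ∑ i, kSED n k v i = v univ := by
  simp_rw [kSED_eq_shapley_truncate hk]
  rw [sum_shapley _ (by simp [truncate, hv])]
  simp [truncate, hkn]

lemma kSED_eq_of_isSymmetricPair (hk : 1 ≤ k) {v : Finset (Fin n) → ℝ} {i j : Fin n}
    (h : IsSymmetricPair v i j) : kSED n k v i = kSED n k v j := by
  rw [kSED_eq_shapley_truncate hk, kSED_eq_shapley_truncate hk]
  exact shapley_eq_of_isSymmetricPair h.truncate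

lemma kSED_add_of_isNullifyingNull (hk : 1 ≤ k) (v : Finset (Fin n) → ℝ)
    {w : Finset (Fin n) → ℝ} {i : Fin n} (h : IsNullifyingNull k w i) :
    kSED n k (v + w) i = kSED n k v i := by
  rw [kSED, kSED]
  congr 1 <;> refine sum_congr rfl fun S hS => ?_ <;> obtain ⟨hS, hSk⟩ := mem_filter.1 hS
  · rw [Pi.add_apply, h.1 S hS (by omega), add_zero]
  · rw [Pi.add_apply, Pi.add_apply, h.2 S hS hSk, add_sub_add_right_eq_sub]

end KSED

end TUGame

open TUGame

theorem kSED_characterization_kCSE_general (n k : ℕ) (hk : 1 ≤ k) (hkn : k ≤ n)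
    (Φ : (Finset (Fin n) → ℝ) → Fin n → ℝ) :
    ((∀ v : Finset (Fin n) → ℝ, v ∅ = 0 → ∑ i, Φ v i = v Finset.univ) ∧
     (∀ v : Finset (Fin n) → ℝ, v ∅ = 0 → ∀ i j : Fin n,
        (∀ S ∈ (Finset.univ \ {i, j} : Finset (Fin n)).powerset,
          v (insert i S) = v (insert j S)) → Φ v i = Φ v j) ∧
     (∀ v w : Finset (Fin n) → ℝ, v ∅ = 0 → w ∅ = 0 → ∀ i : Fin n,
        (∀ S ∈ (Finset.univ.erase i).powerset, S.card < k → w (insert i S) = 0) →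
        (∀ S ∈ (Finset.univ.erase i).powerset, k ≤ S.card → w (insert i S) = w S) →
        Φ (v + w) i = Φ v i))
    ↔ (∀ v : Finset (Fin n) → ℝ, v ∅ = 0 → ∀ i : Fin n, Φ v i = kSED n k v i) := by
  constructor
  · rintro ⟨heff, hsym, hcse⟩ v hv i
    have hdiff := eq_zero_of_sum_eq_zero_of_symm_of_cse (k := k)
      (Ψ := fun v i => Φ v i - kSED n k v i)
      (fun v hv => by rw [sum_sub_distrib, heff v hv, sum_kSED hk hkn v hv, sub_self])
      (fun v hv i j h => by rw [hsym v hv i j h, kSED_eq_of_isSymmetricPair hk h])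
      (fun v w hv hw i h => by rw [hcse v w hv hw i h.1 h.2, kSED_add_of_isNullifyingNull hk v h])
      hv
    exact sub_eq_zero.1 (congrFun hdiff i)
  · intro hΦ
    refine ⟨fun v hv => ?_, fun v hv i j h => ?_, fun v w hv hw i h₁ h₂ => ?_⟩
    · rw [sum_congr rfl fun i _ => hΦ v hv i]
      exact sum_kSED hk hkn v hv
    · rw [hΦ v hv, hΦ v hv]
      exact kSED_eq_of_isSymmetricPair hk h
    · rw [hΦ v hv, hΦ (v + w) (by simp [hv, hw])]
      exact kSED_add_of_isNullifyingNull hk v ⟨h₁, h₂⟩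

/-- a value satisfies efficiency, symmetry and coalitional
`k`-strategic equivalence iff it is the `k`-SED value. -/
theorem kSED_characterization_kCSE (n k : ℕ) (hn : 1 ≤ n) (hk : 1 ≤ k) (hkn : k ≤ n)
    (Φ : (Finset (Fin n) → ℝ) → Fin n → ℝ) :
    ((∀ v : Finset (Fin n) → ℝ, v ∅ = 0 → ∑ i, Φ v i = v Finset.univ) ∧
     (∀ v : Finset (Fin n) → ℝ, v ∅ = 0 → ∀ i j : Fin n,
        (∀ S ∈ (Finset.univ \ {i, j} : Finset (Fin n)).powerset,
          v (insert i S) = v (insert j S)) → Φ v i = Φ v j) ∧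
     (∀ v w : Finset (Fin n) → ℝ, v ∅ = 0 → w ∅ = 0 → ∀ i : Fin n,
        (∀ S ∈ (Finset.univ.erase i).powerset, S.card < k → w (insert i S) = 0) →
        (∀ S ∈ (Finset.univ.erase i).powerset, k ≤ S.card → w (insert i S) = w S) →
        Φ (v + w) i = Φ v i))
    ↔ (∀ v : Finset (Fin n) → ℝ, v ∅ = 0 → ∀ i : Fin n, Φ v i = kSED n k v i) :=
  kSED_characterization_kCSE_general n k hk hkn Φ
end

section
/- If a value Φ satisfies fairness and the k-nullifying null player property, then Φ satisfies symmetry. -/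
open Finset

theorem fairness_kNNPP_implies_symmetry_general (n k : ℕ)
    (Φ : (Finset (Fin n) → ℝ) → Fin n → ℝ)
    (hF : ∀ v w : Finset (Fin n) → ℝ, v ∅ = 0 → w ∅ = 0 → ∀ i j : Fin n,
      (∀ S ∈ (Finset.univ \ {i, j} : Finset (Fin n)).powerset,
        w (insert i S) = w (insert j S)) →
      Φ (v + w) i - Φ v i = Φ (v + w) j - Φ v j)
    (hNNPP : ∀ v : Finset (Fin n) → ℝ, v ∅ = 0 → ∀ i : Fin n,
      (∀ S ∈ (Finset.univ.erase i).powerset, S.card < k → v (insert i S) = 0) →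
      (∀ S ∈ (Finset.univ.erase i).powerset, k ≤ S.card → v (insert i S) = v S) →
      Φ v i = 0) :
    ∀ v : Finset (Fin n) → ℝ, v ∅ = 0 → ∀ i j : Fin n,
      (∀ S ∈ (Finset.univ \ {i, j} : Finset (Fin n)).powerset,
        v (insert i S) = v (insert j S)) → Φ v i = Φ v j := by
  intro v hv i j hsym
  have hzero : ∀ m, Φ 0 m = 0 := fun m =>
    hNNPP 0 rfl m (fun _ _ _ => rfl) (fun _ _ _ => rfl)
  have hfair := hF 0 v rfl hv i j hsym
  rw [zero_add, hzero i, hzero j] at hfair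
  linarith

/-- fairness and the `k`-nullifying null player property imply symmetry. -/
theorem fairness_kNNPP_implies_symmetry (n k : ℕ) (hk : 1 ≤ k) (hkn : k ≤ n)
    (Φ : (Finset (Fin n) → ℝ) → Fin n → ℝ)
    (hF : ∀ v w : Finset (Fin n) → ℝ, v ∅ = 0 → w ∅ = 0 → ∀ i j : Fin n,
      (∀ S ∈ (Finset.univ \ {i, j} : Finset (Fin n)).powerset,
        w (insert i S) = w (insert j S)) →
      Φ (v + w) i - Φ v i = Φ (v + w) j - Φ v j)
    (hNNPP : ∀ v : Finset (Fin n) → ℝ, v ∅ = 0 → ∀ i : Fin n,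
      (∀ S ∈ (Finset.univ.erase i).powerset, S.card < k → v (insert i S) = 0) →
      (∀ S ∈ (Finset.univ.erase i).powerset, k ≤ S.card → v (insert i S) = v S) →
      Φ v i = 0) :
    ∀ v : Finset (Fin n) → ℝ, v ∅ = 0 → ∀ i j : Fin n,
      (∀ S ∈ (Finset.univ \ {i, j} : Finset (Fin n)).powerset,
        v (insert i S) = v (insert j S)) → Φ v i = Φ v j :=
  fairness_kNNPP_implies_symmetry_general n k Φ hF hNNPP
end

section
/- The k-SED value satisfies k-partial monotonicity: for games v, w and player i, if v(S∪{i}) ≥ w(S∪{i}) for all S ⊆ N\{i} with |S| = k−1 and v(S∪{i}) − v(S) ≥ w(S∪{i}) − w(S) for all S ⊆ N\{i} with |S| ≥ k, then Φ^{k-SED}_i(v) ≥ Φ^{k-SED}_i(w). -/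
open Finset

/-- the `k`-SED value satisfies `k`-partial monotonicity. -/
theorem kSED_partial_monotonicity (n k : ℕ) (hk : 1 ≤ k) (hkn : k ≤ n)
    (v w : Finset (Fin n) → ℝ) (hv : v ∅ = 0) (hw : w ∅ = 0) (i : Fin n)
    (h1 : ∀ S ∈ (Finset.univ.erase i).powerset, S.card = k - 1 →
      w (insert i S) ≤ v (insert i S))
    (h2 : ∀ S ∈ (Finset.univ.erase i).powerset, k ≤ S.card →
      w (insert i S) - w S ≤ v (insert i S) - v S) :
    kSED n k w i ≤ kSED n k v i := by
  unfold kSED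
  apply add_le_add
  · refine Finset.sum_le_sum fun S hS => ?_
    simp only [Finset.mem_filter] at hS
    apply mul_le_mul_of_nonneg_left (h1 S hS.1 hS.2)
    positivity
  · refine Finset.sum_le_sum fun S hS => ?_
    simp only [Finset.mem_filter] at hS
    apply mul_le_mul_of_nonneg_left (h2 S hS.1 hS.2)
    positivity
end
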